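/- Uniform bound for the truncated conditional expectation: fix t, M>0, n∈ℕ, a labeled tree i∈𝕋*[n] with leaf masses y, and a bounded continuous f on A_τ(0,t) with τ=τ(i); let f_i^M(ξ) = f(g_i(ξ))Ψ_M(m(ξ)), where Ψ_M equals 1 on (0,M], M+1−x on [M,M+1], 0 on [M+1,∞), and g_i forgets labels. Then |P_t^N f_i^M(y)| ≤ C‖f‖_∞ t^{n−1}, where C = (sup_{(x,y')∈[0,M+1]²} K(x,y'))^{n−1} and P_t^N f_i^M(y) = N^{n−1}E(f_i^M(ξ_t^i)1{S_i≤t<T_i} | F_J) with J=[N]∖[n]. -/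

import Mathlib

open MeasureTheory ProbabilityTheory Filter
open scoped ENNReal Classical

noncomputable section

/-! ### Labeled binary trees (elements of `𝕋(J)`) -/

/-- Finite binary trees with leaves labeled by natural numbers. -/
inductive LTree : Type
  | leaf (k : ℕ) : LTree
  | node (l r : LTree) : LTree
  deriving DecidableEq

namespace LTree

/-- The set of leaf labels λ(i). -/
def labels : LTree → Finset ℕ
  | leaf k => {k}
  | node l r => labels l ∪ labels r

/-- The counting function n(i): the number of leaves. -/
def nLeaves : LTree → ℕ
  | leaf _ => 1
  | node l r => nLeaves l + nLeaves r

/-- A tree has distinct leaf labels iff `|λ(i)| = n(i)`. -/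
def distinct (i : LTree) : Prop := i.labels.card = i.nLeaves

/-- Whether a tree is a single leaf. -/
def isLeaf : LTree → Prop
  | leaf _ => True
  | node _ _ => False

/-- The mass `y_i` of a labeled tree, given the masses of the initial particles. -/
def massOf (y : ℕ → ℝ) : LTree → ℝ
  | leaf k => y k
  | node l r => massOf y l + massOf y r

/-- The list of leaf labels, from left to right. -/
def leafList : LTree → List ℕ
  | leaf k => [k]
  | node l r => leafList l ++ leafList r

end LTree

/-- `𝕋*J`: binary trees with distinct leaf labels belonging to `J`. -/
def TStar (J : Finset ℕ) : Set LTree := {i | i.distinct ∧ i.labels ⊆ J}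

/-- `𝕋₊*J = 𝕋*J \ J`. -/
def TplusStar (J : Finset ℕ) : Set LTree := {i | i.distinct ∧ i.labels ⊆ J ∧ ¬ i.isLeaf}

/-! ### Tree shapes (elements of `𝕋 = 𝕋({1})`) -/

/-- Binary tree shapes. -/
inductive TreeShape : Type
  | leaf : TreeShape
  | node (l r : TreeShape) : TreeShape
  deriving DecidableEq

/-- The type (shape) τ(i) of a labeled tree. -/
def LTree.shape : LTree → TreeShape
  | .leaf _ => .leaf
  | .node l r => .node l.shape r.shape

/-- The number of symmetries q(τ) of a tree shape. -/
def qsym : TreeShape → ℕ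
  | .leaf => 0
  | .node l r => qsym l + qsym r + (if l = r then 1 else 0)

/-! ### Historical trees: the space `A(0,t)` -/

/-- Historical trees: leaves carry masses, inner nodes carry coagulation times. -/
inductive HTree : Type
  | leaf (m : ℝ) : HTree
  | node (s : ℝ) (l r : HTree) : HTree

namespace HTree

/-- The mass function m(ξ). -/
def mass : HTree → ℝ
  | leaf m => m
  | node _ l r => mass l + mass r

/-- The number of leaves (initial particles) of a historical tree. -/
def nLeaves : HTree → ℕ
  | leaf _ => 1
  | node _ l r => nLeaves l + nLeaves r

/-- The shape of a historical tree. -/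
def shape : HTree → TreeShape
  | leaf _ => .leaf
  | node _ l r => .node (shape l) (shape r)

/-- The list of the leaf masses, from left to right. -/
def leafList : HTree → List ℝ
  | leaf m => [m]
  | node _ l r => leafList l ++ leafList r

/-- `ξ ∈ A(0,t)`: the root coagulation time lies in (0,t), the coagulation times
decrease along the tree, and all masses are positive. -/
def memA : HTree → ℝ → Prop
  | leaf m, _ => 0 < m
  | node s l r, t => 0 < s ∧ s < t ∧ memA l s ∧ memA r s

/-- An injective encoding, used to give `HTree` a topology. -/
def encode : HTree → List ℝ
  | leaf m => [0, m]
  | node s l r => 1 :: s :: (encode l ++ encode r)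

instance : TopologicalSpace HTree := TopologicalSpace.induced encode inferInstance
instance : MeasurableSpace HTree := borel HTree

end HTree

/-- The set `A_τ(0,t)` of historical trees of shape τ. -/
def Aset (τ : TreeShape) (t : ℝ) : Set HTree := {ξ | ξ.shape = τ ∧ ξ.memA t}

/-- The full historical space `A(0,t)`. -/
def AsetAll (t : ℝ) : Set HTree := {ξ | ξ.memA t}

/-! ### Quantities attached to a historical tree -/

/-- `K_ξ`, defined recursively by `K_ξ = 1` on leaves and
`K_ξ = K(m(ξ₁),m(ξ₂)) K_{ξ₁} K_{ξ₂}`. -/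
def Kxi (K : ℝ → ℝ → ℝ) : HTree → ℝ
  | .leaf _ => 1
  | .node _ l r => K l.mass r.mass * Kxi K l * Kxi K r

/-- The masses `(y_r : r ∈ Π_ξ⁻¹(u))` of the subtrees of ξ alive at time u. -/
def HTree.aliveMasses : HTree → ℝ → List ℝ
  | .leaf m, _ => [m]
  | .node s l r, u =>
      if s ≤ u then [HTree.mass l + HTree.mass r]
      else aliveMasses l u ++ aliveMasses r u

/-- `½ Σ_{a ≠ b ∈ L} K(a,b)` for a list of masses L. -/
def pairSum (K : ℝ → ℝ → ℝ) (L : List ℝ) : ℝ :=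
  ((L.map fun a => (L.map fun b => K a b).sum).sum - (L.map fun a => K a a).sum) / 2

/-- `Σ_{a ∈ L₁, b ∈ L₂} K(a,b)`. -/
def crossSum (K : ℝ → ℝ → ℝ) (L1 L2 : List ℝ) : ℝ :=
  (L1.map fun a => (L2.map fun b => K a b).sum).sum

/-- `K_s(ξ) = ½ Σ_{r ≠ r' ∈ Π_ξ⁻¹(s)} K(y_r, y_{r'})`. -/
def pairIntensity (K : ℝ → ℝ → ℝ) (ξ : HTree) (s : ℝ) : ℝ := pairSum K (ξ.aliveMasses s)

/-- `∫_{Δ(ξ)} ∫_E K(y_r, y') μ_{Π_ξ(r)}(dy') dr`: each subtree σ of ξ contributes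
the integral over its lifetime of `∫ K(m(σ), y') μ_u(dy')`. -/
def deltaInt (K : ℝ → ℝ → ℝ) (μfam : ℝ → Measure ℝ) : HTree → ℝ → ℝ
  | .leaf m, t => ∫ r in (0:ℝ)..t, ∫ z, K m z ∂(μfam r)
  | .node s l r, t =>
      deltaInt K μfam l s + deltaInt K μfam r s +
        ∫ u in s..t, ∫ z, K (HTree.mass l + HTree.mass r) z ∂(μfam u)

/-! ### The Lebesgue measure `ν_i^y` on `A_i^y(0,t)` -/

/-- Binary trees with masses at the leaves (a labeled tree together with its
vector of masses). -/
inductive MTree : Type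
  | leaf (m : ℝ) : MTree
  | node (l r : MTree) : MTree

/-- The mass tree of a labeled tree, given the masses of the initial particles. -/
def LTree.toMTree (y : ℕ → ℝ) : LTree → MTree
  | .leaf k => .leaf (y k)
  | .node l r => .node (l.toMTree y) (r.toMTree y)

/-- `ν_i^y`: Lebesgue measure on the coagulation times (compatible with the tree
order and below the horizon) of historical trees over the tree `i` with fixed
leaf masses `y`. -/
def nuMeasure : MTree → ℝ → Measure HTree
  | .leaf m, _ => Measure.dirac (HTree.leaf m)
  | .node l r, t =>
      (volume.restrict (Set.Ioo (0:ℝ) t)).bind fun s =>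
        ((nuMeasure l s).prod (nuMeasure r s)).map fun p => HTree.node s p.1 p.2

/-! ### The coupled Marcus–Lushnikov construction -/

/-- The coupled clocks: `S_i = 0` for initial particles and
`S_{{i,j}} = max(S_i,S_j) + (N / K(y_i,y_j)) U_{{i,j}}`. -/
def Sclock (N : ℝ) (K : ℝ → ℝ → ℝ) (y : ℕ → ℝ) (U : LTree → ℝ) : LTree → ℝ
  | .leaf _ => 0
  | .node l r =>
      max (Sclock N K y U l) (Sclock N K y U r) +
        (N / K (l.massOf y) (r.massOf y)) * U (.node l r)

/-- Merge the (a.s. unique) pair of present tree particles with minimal clock. -/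
def stepMerge (S : LTree → ℝ) (I : Finset LTree) : Finset LTree :=
  if h : ∃ p : LTree × LTree, p.1 ∈ I ∧ p.2 ∈ I ∧ p.1 ≠ p.2 ∧
      ∀ i ∈ I, ∀ j ∈ I, i ≠ j → S (.node p.1 p.2) ≤ S (.node i j) then
    insert (.node (Classical.choose h).1 (Classical.choose h).2)
      ((I.erase (Classical.choose h).1).erase (Classical.choose h).2)
  else I

/-- The jump chain of the coupled process started from the particles of `J`. -/
def evolve (S : LTree → ℝ) (J : Finset ℕ) : ℕ → Finset LTree
  | 0 => J.image LTree.leaf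
  | n + 1 => stepMerge S (evolve S J n)

/-- The time of the next merge from the state `I`. -/
def mergeClock (S : LTree → ℝ) (I : Finset LTree) : ℝ :=
  sInf {u : ℝ | ∃ i ∈ I, ∃ j ∈ I, i ≠ j ∧ u = S (.node i j)}

/-- The number of merges having occurred up to time t. -/
def numMerges (S : LTree → ℝ) (J : Finset ℕ) (t : ℝ) : ℕ :=
  ((Finset.range J.card).filter fun n => mergeClock S (evolve S J n) ≤ t).card

/-- The set of tree particles present at time t in the coupled process started
from the particles of `J`. -/
def presentTrees (S : LTree → ℝ) (J : Finset ℕ) (t : ℝ) : Finset LTree :=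
  evolve S J (numMerges S J t)

/-- The death time `T_i^J` of the tree particle `i` (`⊤` if it never dies,
`S_i` if it is never formed). -/
def deathTime (S : LTree → ℝ) (J : Finset ℕ) (i : LTree) : EReal :=
  sInf {u : EReal | ∃ s : ℝ, u = (s : EReal) ∧ S i ≤ s ∧ i ∉ presentTrees S J s}

/-- `X_t^J`: the integer-valued measure recording the masses of the particles
present at time t in the coupled process started from `J`. -/
def mlState (y : ℕ → ℝ) (S : LTree → ℝ) (J : Finset ℕ) (t : ℝ) : Measure ℝ :=
  ∑ i ∈ presentTrees S J t, Measure.dirac (i.massOf y)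

/-- `μ_t^{N,J} = N⁻¹ X_t^J`. -/
def mlMeasure (y : ℕ → ℝ) (N : ℕ) (S : LTree → ℝ) (J : Finset ℕ) (t : ℝ) : Measure ℝ :=
  ((N : ℝ≥0∞))⁻¹ • mlState y S J t

/-- The historical tree `ξ_t^i` of a tree particle `i`: its inner nodes carry
the coagulation times (which are the clocks `S`) and its leaves the masses. -/
def histTree (S : LTree → ℝ) (y : ℕ → ℝ) : LTree → HTree
  | .leaf k => .leaf (y k)
  | .node l r => .node (S (.node l r)) (histTree S y l) (histTree S y r)

/-- The empirical historical measure `μ̃_t^N = N⁻¹ Σ_{i ∈ I(t)} δ_{ξ_t^i}`. -/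
def histEmp (y : ℕ → ℝ) (N : ℕ) (S : LTree → ℝ) (t : ℝ) : Measure HTree :=
  ((N : ℝ≥0∞))⁻¹ • ∑ i ∈ presentTrees S (Finset.range N) t, Measure.dirac (histTree S y i)

/-! ### The probability space -/

/-- The sample space `Ω = (0,∞)^{𝕋₊*[N]}` (we use clocks indexed by all trees). -/
abbrev Omega : Type := LTree → ℝ

/-- The standard exponential distribution on `(0,∞)`. -/
def expOne : Measure ℝ :=
  (volume.restrict (Set.Ioi (0 : ℝ))).withDensity fun x => ENNReal.ofReal (Real.exp (-x))

/-- `F_J = σ(U_i : i ∈ 𝕋₊*J)`. -/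
def Fsigma (J : Finset ℕ) : MeasurableSpace Omega :=
  ⨆ i ∈ TplusStar J, MeasurableSpace.comap (fun ω : Omega => ω i) inferInstance

/-! ### Limit objects -/

/-- `exp(-∫_s^t ∫_E K(x,y') μ_r(dy') dr)`. -/
def survFactor (K : ℝ → ℝ → ℝ) (μfam : ℝ → Measure ℝ) (x s t : ℝ) : ℝ :=
  Real.exp (-(∫ r in s..t, ∫ z, K x z ∂(μfam r)))

/-- The limit measure `μ̃_t` on historical trees of a given shape, defined by the
recursion of the paper. -/
def limitHist (K : ℝ → ℝ → ℝ) (μfam : ℝ → Measure ℝ) (μ0 : Measure ℝ) :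
    TreeShape → ℝ → Measure HTree
  | .leaf, t =>
      (μ0.withDensity fun x => ENNReal.ofReal (survFactor K μfam x 0 t)).map HTree.leaf
  | .node τ1 τ2, t =>
      (volume.restrict (Set.Ioo (0:ℝ) t)).bind fun s =>
        ((((limitHist K μfam μ0 τ1 s).prod (limitHist K μfam μ0 τ2 s)).withDensity fun p =>
            ENNReal.ofReal ((if τ1 = τ2 then (1:ℝ)/2 else 1) * K p.1.mass p.2.mass *
              survFactor K μfam (p.1.mass + p.2.mass) s t)).map fun p =>
          HTree.node s p.1 p.2)

/-- The limit measure `μ̃_t` on the whole historical space `A(0,t)`. -/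
def limitHistTotal (K : ℝ → ℝ → ℝ) (μfam : ℝ → Measure ℝ) (μ0 : Measure ℝ) (t : ℝ) :
    Measure HTree :=
  Measure.sum fun τ : TreeShape => limitHist K μfam μ0 τ t

/-- A strong solution of the measure-valued Smoluchowski coagulation equation on `[0,T)`. -/
def IsSmoluchowskiSolution (K : ℝ → ℝ → ℝ) (φ : ℝ → ℝ) (T : ℝ) (μfam : ℝ → Measure ℝ) :
    Prop :=
  (∀ B : Set ℝ, MeasurableSet B → Measurable fun t => (μfam t B).toReal) ∧
  (∀ t, 0 ≤ t → t < T →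
    (∫⁻ s in Set.Ioc (0:ℝ) t, ∫⁻ x, ENNReal.ofReal ((φ x)^2) ∂(μfam s)) ≠ ⊤) ∧
  (∀ f : ℝ → ℝ, Measurable f → (∃ C, ∀ x, |f x| ≤ C) → ∀ t, 0 ≤ t → t < T →
    ∫ x, f x ∂(μfam t) = ∫ x, f x ∂(μfam 0) +
      ∫ s in (0:ℝ)..t,
        (1/2) * ∫ x, ∫ z, (f (x + z) - f x - f z) * K x z ∂(μfam s) ∂(μfam s))

/-! ### Hypothesis bundles -/

/-- The basic setting: a symmetric continuous positive kernel, positive masses,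
and i.i.d. standard exponential clocks. -/
structure BaseSetting where
  K : ℝ → ℝ → ℝ
  y : ℕ → ℝ
  P : Measure Omega
  prob : IsProbabilityMeasure P
  Kpos : ∀ x, 0 < x → ∀ z, 0 < z → 0 < K x z
  Ksymm : ∀ x z, K x z = K z x
  Kcont : ContinuousOn (fun p : ℝ × ℝ => K p.1 p.2) (Set.Ioi 0 ×ˢ Set.Ioi 0)
  ypos : ∀ k, 0 < y k
  indep : iIndepFun (m := fun _ : LTree => (inferInstance : MeasurableSpace ℝ))
    (fun i ω => ω i) P
  law : ∀ i : LTree, P.map (fun ω => ω i) = expOne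

/-- The full setting of the paper: additionally, `K = K̃ φ φ` with `K̃` bounded and
`φ ≥ 1` continuous sublinear, `K` bounded on squares, `μ₀` has finite `φ²`-moment,
the empirical initial conditions converge weakly (with weight `φ`) to `μ₀`, and
`(μ_t)_{t<T}` is a strong solution of the Smoluchowski equation started at `μ₀`. -/
structure Setting extends BaseSetting where
  Ktil : ℝ → ℝ → ℝ
  phi : ℝ → ℝ
  μ0 : Measure ℝ
  T : ℝ
  μfam : ℝ → Measure ℝ
  Kbdd : ∀ M : ℝ, 0 < M → ∃ C, ∀ x ∈ Set.Icc (0:ℝ) M, ∀ z ∈ Set.Icc (0:ℝ) M, K x z ≤ C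
  Kfact : ∀ x, 0 < x → ∀ z, 0 < z → K x z = Ktil x z * phi x * phi z
  Ktilbdd : ∃ C, ∀ x z, |Ktil x z| ≤ C
  phicont : ContinuousOn phi (Set.Ioi 0)
  phione : ∀ x, 0 < x → 1 ≤ phi x
  phisub : ∀ x, 0 < x → ∀ z, 0 < z → phi (x + z) ≤ phi x + phi z
  μ0supp : μ0 (Set.Iic 0) = 0
  μ0phi2 : (∫⁻ x, ENNReal.ofReal ((phi x)^2) ∂μ0) ≠ ⊤
  weak : ∀ f : ℝ → ℝ, Continuous f → (∃ C, ∀ x, |f x| ≤ C) →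
    Tendsto (fun N : ℕ => (N:ℝ)⁻¹ * ∑ k ∈ Finset.range N, f (y k))
      atTop (nhds (∫ x, f x ∂μ0))
  weakphi : ∀ f : ℝ → ℝ, Continuous f → (∃ C, ∀ x, |f x| ≤ C) →
    Tendsto (fun N : ℕ => (N:ℝ)⁻¹ * ∑ k ∈ Finset.range N, f (y k) * phi (y k))
      atTop (nhds (∫ x, f x * phi x ∂μ0))
  Tpos : 0 < T
  μfam0 : μfam 0 = μ0
  smol : IsSmoluchowskiSolution K phi T μfam


/-- The truncation function `Ψ_M`: equal to 1 on `(0,M]`, to `M+1-x` on `[M,M+1]`,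
and to 0 on `[M+1,∞)`. -/
def psiM (M x : ℝ) : ℝ := max 0 (min 1 (M + 1 - x))

/-! ### Auxiliary material for Statement 18 -/

namespace Stmt18

/-- The finite set of internal nodes (as subtrees) of a labeled tree. -/
def inodes : LTree → Finset LTree
  | .leaf _ => ∅
  | .node l r => insert (.node l r) (inodes l ∪ inodes r)

lemma labels_nonempty : ∀ j : LTree, j.labels.Nonempty
  | .leaf k => ⟨k, by simp [LTree.labels]⟩
  | .node l r => by
      obtain ⟨k, hk⟩ := labels_nonempty l
      exact ⟨k, by simp only [LTree.labels, Finset.mem_union]; exact Or.inl hk⟩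

lemma labels_subset_of_mem_inodes : ∀ {j v : LTree}, v ∈ inodes j → v.labels ⊆ j.labels := by
  intro j
  induction j with
  | leaf k => intro v hv; simp [inodes] at hv
  | node l r ihl ihr =>
      intro v hv
      simp only [inodes, Finset.mem_insert, Finset.mem_union] at hv
      rcases hv with rfl | hv | hv
      · exact subset_rfl
      · exact (ihl hv).trans (by simp only [LTree.labels]; exact Finset.subset_union_left)
      · exact (ihr hv).trans (by simp only [LTree.labels]; exact Finset.subset_union_right)

lemma one_le_nLeaves : ∀ j : LTree, 1 ≤ j.nLeaves
  | .leaf _ => le_rfl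
  | .node l r => le_trans (one_le_nLeaves l) (by simp [LTree.nLeaves])

lemma nLeaves_le_of_mem_inodes : ∀ {j v : LTree}, v ∈ inodes j → v.nLeaves ≤ j.nLeaves := by
  intro j
  induction j with
  | leaf k => intro v hv; simp [inodes] at hv
  | node l r ihl ihr =>
      intro v hv
      simp only [inodes, Finset.mem_insert, Finset.mem_union] at hv
      rcases hv with rfl | hv | hv
      · exact le_rfl
      · exact (ihl hv).trans (by simp [LTree.nLeaves])
      · exact (ihr hv).trans (by simp [LTree.nLeaves])

lemma card_labels_le : ∀ j : LTree, j.labels.card ≤ j.nLeaves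
  | .leaf k => by simp [LTree.labels, LTree.nLeaves]
  | .node l r => by
      simp only [LTree.labels, LTree.nLeaves]
      exact (Finset.card_union_le _ _).trans
        (Nat.add_le_add (card_labels_le l) (card_labels_le r))

lemma distinct_node {l r : LTree} (h : (LTree.node l r).distinct) :
    l.distinct ∧ r.distinct ∧ Disjoint l.labels r.labels := by
  have hcard : (l.labels ∪ r.labels).card = l.nLeaves + r.nLeaves := h
  have h1 : (l.labels ∪ r.labels).card ≤ l.labels.card + r.labels.card :=
    Finset.card_union_le _ _
  have h2 := card_labels_le l
  have h3 := card_labels_le r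
  have hl : l.labels.card = l.nLeaves := by omega
  have hr : r.labels.card = r.nLeaves := by omega
  refine ⟨hl, hr, ?_⟩
  rw [← Finset.card_union_eq_card_add_card]
  omega

lemma card_inodes : ∀ {j : LTree}, j.distinct → (inodes j).card = j.nLeaves - 1 := by
  intro j
  induction j with
  | leaf k => intro _; simp [inodes, LTree.nLeaves]
  | node l r ihl ihr =>
      intro h
      obtain ⟨hl, hr, hdisj⟩ := distinct_node h
      have hnotmem : LTree.node l r ∉ inodes l ∪ inodes r := by
        intro hmem
        rcases Finset.mem_union.mp hmem with hm | hm
        · have ha1 := nLeaves_le_of_mem_inodes hm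
          have ha2 := one_le_nLeaves r
          simp only [LTree.nLeaves] at ha1
          omega
        · have ha1 := nLeaves_le_of_mem_inodes hm
          have ha2 := one_le_nLeaves l
          simp only [LTree.nLeaves] at ha1
          omega
      have hdisj2 : Disjoint (inodes l) (inodes r) := by
        rw [Finset.disjoint_left]
        intro v hv1 hv2
        obtain ⟨k, hk⟩ := labels_nonempty v
        exact (Finset.disjoint_left.mp hdisj
          (labels_subset_of_mem_inodes hv1 hk)) (labels_subset_of_mem_inodes hv2 hk)
      have h1 := one_le_nLeaves l
      have h2 := one_le_nLeaves r
      simp only [inodes, LTree.nLeaves]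
      rw [Finset.card_insert_of_notMem hnotmem, Finset.card_union_of_disjoint hdisj2,
        ihl hl, ihr hr]
      omega

lemma massOf_pos {y : ℕ → ℝ} (hy : ∀ k, 0 < y k) : ∀ j : LTree, 0 < j.massOf y
  | .leaf k => hy k
  | .node l r => by
      have := massOf_pos hy l
      have := massOf_pos hy r
      simp only [LTree.massOf]
      linarith

lemma self_mem_inodes (l r : LTree) : LTree.node l r ∈ inodes (LTree.node l r) :=
  Finset.mem_insert_self _ _

lemma mem_inodes_left {v l r : LTree} (h : v ∈ inodes l) :
    v ∈ inodes (LTree.node l r) :=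
  Finset.mem_insert_of_mem (Finset.mem_union_left _ h)

lemma mem_inodes_right {v l r : LTree} (h : v ∈ inodes r) :
    v ∈ inodes (LTree.node l r) :=
  Finset.mem_insert_of_mem (Finset.mem_union_right _ h)

section Sclock

variable {Nr : ℝ} {K : ℝ → ℝ → ℝ} {y : ℕ → ℝ} {ω : LTree → ℝ}

lemma Sclock_nonneg (hN : 0 ≤ Nr) (hK : ∀ x z, 0 < x → 0 < z → 0 < K x z)
    (hy : ∀ k, 0 < y k) :
    ∀ j : LTree, (∀ v ∈ inodes j, 0 ≤ ω v) → 0 ≤ Sclock Nr K y ω j := by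
  intro j
  induction j with
  | leaf k => intro _; simp [Sclock]
  | node l r ihl ihr =>
      intro hnn
      have h1 : 0 ≤ Sclock Nr K y ω l := ihl fun v hv => hnn v (mem_inodes_left hv)
      have h2 : 0 ≤ Sclock Nr K y ω r := ihr fun v hv => hnn v (mem_inodes_right hv)
      have hKp : 0 < K (l.massOf y) (r.massOf y) :=
        hK _ _ (massOf_pos hy l) (massOf_pos hy r)
      have h3 : 0 ≤ Nr / K (l.massOf y) (r.massOf y) * ω (LTree.node l r) :=
        mul_nonneg (div_nonneg hN hKp.le) (hnn _ (self_mem_inodes l r))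
      simp only [Sclock]
      have := le_max_left (Sclock Nr K y ω l) (Sclock Nr K y ω r)
      linarith

lemma Sclock_key {t B C0 : ℝ} (hN : 0 < Nr) (ht : 0 ≤ t)
    (hK : ∀ x z, 0 < x → 0 < z → 0 < K x z) (hy : ∀ k, 0 < y k)
    (hC0 : ∀ x z, 0 < x → x ≤ B → 0 < z → z ≤ B → K x z ≤ C0) :
    ∀ j : LTree, j.massOf y ≤ B → (∀ v ∈ inodes j, 0 ≤ ω v) →
      Sclock Nr K y ω j ≤ t → ∀ v ∈ inodes j, ω v ≤ C0 * t / Nr := by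
  intro j
  induction j with
  | leaf k => intro _ _ _ v hv; simp [inodes] at hv
  | node l r ihl ihr =>
      intro hmass hnn hS v hv
      have hml : 0 < l.massOf y := massOf_pos hy l
      have hmr : 0 < r.massOf y := massOf_pos hy r
      have hmass' : (LTree.node l r).massOf y = l.massOf y + r.massOf y := rfl
      have hmlB : l.massOf y ≤ B := by rw [hmass'] at hmass; linarith
      have hmrB : r.massOf y ≤ B := by rw [hmass'] at hmass; linarith
      have hKp : 0 < K (l.massOf y) (r.massOf y) := hK _ _ hml hmr
      have hKC : K (l.massOf y) (r.massOf y) ≤ C0 := hC0 _ _ hml hmlB hmr hmrB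
      have hSl : 0 ≤ Sclock Nr K y ω l :=
        Sclock_nonneg hN.le hK hy l fun v hv => hnn v (mem_inodes_left hv)
      have hSr : 0 ≤ Sclock Nr K y ω r :=
        Sclock_nonneg hN.le hK hy r fun v hv => hnn v (mem_inodes_right hv)
      have hω0 : 0 ≤ ω (LTree.node l r) := hnn _ (self_mem_inodes l r)
      have hterm : 0 ≤ Nr / K (l.massOf y) (r.massOf y) * ω (LTree.node l r) :=
        mul_nonneg (div_nonneg hN.le hKp.le) hω0
      have hSeq : Sclock Nr K y ω (LTree.node l r) =
          max (Sclock Nr K y ω l) (Sclock Nr K y ω r) +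
            Nr / K (l.massOf y) (r.massOf y) * ω (LTree.node l r) := rfl
      have hmax : 0 ≤ max (Sclock Nr K y ω l) (Sclock Nr K y ω r) :=
        le_trans hSl (le_max_left _ _)
      simp only [inodes, Finset.mem_insert, Finset.mem_union] at hv
      rcases hv with rfl | hv | hv
      · -- the root node
        have h1 : Nr / K (l.massOf y) (r.massOf y) * ω (LTree.node l r) ≤ t := by
          rw [hSeq] at hS; linarith
        have h2 : Nr * ω (LTree.node l r) ≤ t * K (l.massOf y) (r.massOf y) := by
          rw [div_mul_eq_mul_div, div_le_iff₀ hKp] at h1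
          linarith
        rw [le_div_iff₀ hN]
        calc ω (LTree.node l r) * Nr = Nr * ω (LTree.node l r) := mul_comm _ _
          _ ≤ t * K (l.massOf y) (r.massOf y) := h2
          _ ≤ t * C0 := by exact mul_le_mul_of_nonneg_left hKC ht
          _ = C0 * t := mul_comm _ _
      · have hS' : Sclock Nr K y ω l ≤ t := by
          rw [hSeq] at hS
          have := le_max_left (Sclock Nr K y ω l) (Sclock Nr K y ω r)
          linarith
        exact ihl hmlB (fun v hv => hnn v (mem_inodes_left hv)) hS' v hv
      · have hS' : Sclock Nr K y ω r ≤ t := by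
          rw [hSeq] at hS
          have := le_max_right (Sclock Nr K y ω l) (Sclock Nr K y ω r)
          linarith
        exact ihr hmrB (fun v hv => hnn v (mem_inodes_right hv)) hS' v hv

end Sclock

/-! #### Measurability -/

lemma measurable_Sclock {m : MeasurableSpace Omega} (Nr : ℝ) (K : ℝ → ℝ → ℝ) (y : ℕ → ℝ)
    (j : LTree) (hev : ∀ v ∈ inodes j, Measurable[m] fun ω : Omega => ω v) :
    Measurable[m] fun ω : Omega => Sclock Nr K y ω j := by
  induction j with
  | leaf k =>
      have : (fun ω : Omega => Sclock Nr K y ω (.leaf k)) = fun _ => (0:ℝ) := rfl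
      rw [this]; exact measurable_const
  | node l r ihl ihr =>
      have hl := ihl fun v hv => hev v (mem_inodes_left hv)
      have hr := ihr fun v hv => hev v (mem_inodes_right hv)
      have hself := hev _ (self_mem_inodes l r)
      have : (fun ω : Omega => Sclock Nr K y ω (.node l r)) =
          fun ω : Omega => max (Sclock Nr K y ω l) (Sclock Nr K y ω r) +
            Nr / K (l.massOf y) (r.massOf y) * ω (LTree.node l r) := rfl
      rw [this]
      exact (hl.max hr).add (hself.const_mul _)

/-- The σ-algebra generated by the clocks attached to trees with labels in `[n]`. -/
def mLeft (n : ℕ) : MeasurableSpace Omega :=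
  ⨆ j ∈ {j : LTree | j.labels ⊆ Finset.range n},
    MeasurableSpace.comap (fun ω : Omega => ω j) inferInstance

lemma mLeft_le (n : ℕ) : mLeft n ≤ (inferInstance : MeasurableSpace Omega) :=
  iSup₂_le fun j _ => (measurable_pi_apply j).comap_le

lemma Fsigma_le (J : Finset ℕ) :
    Fsigma J ≤ (inferInstance : MeasurableSpace Omega) :=
  iSup₂_le fun j _ => (measurable_pi_apply j).comap_le

lemma measurable_eval_mLeft {n : ℕ} {j : LTree} (hj : j.labels ⊆ Finset.range n) :
    Measurable[mLeft n] fun ω : Omega => ω j :=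
  measurable_iff_comap_le.mpr
    (le_iSup₂ (f := fun (j : LTree) (_ : j ∈ {j : LTree | j.labels ⊆ Finset.range n}) =>
      MeasurableSpace.comap (fun ω : Omega => ω j) inferInstance) j hj)

lemma indep_mLeft (σ : BaseSetting) (n N : ℕ) :
    ProbabilityTheory.Indep (mLeft n) (Fsigma (Finset.range N \ Finset.range n)) σ.P := by
  refine ProbabilityTheory.indep_iSup_of_disjoint
    (m := fun j : LTree => MeasurableSpace.comap (fun ω : Omega => ω j) inferInstance)
    (fun j => (measurable_pi_apply j).comap_le) σ.indep.iIndep ?_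
  rw [Set.disjoint_left]
  rintro j hj ⟨_, hsub, _⟩
  obtain ⟨k, hk⟩ := labels_nonempty j
  have h1 : k ∈ Finset.range n := hj hk
  have h2 : k ∈ Finset.range N \ Finset.range n := hsub hk
  rw [Finset.mem_sdiff] at h2
  exact h2.2 h1

/-! #### The probability bound -/

lemma expOne_Iio : expOne (Set.Iio 0) = 0 := by
  rw [expOne, withDensity_apply _ measurableSet_Iio, Measure.restrict_restrict measurableSet_Iio]
  have h : Set.Iio (0:ℝ) ∩ Set.Ioi 0 = ∅ := by
    ext x; simp only [Set.mem_inter_iff, Set.mem_Iio, Set.mem_Ioi, Set.mem_empty_iff_false,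
      iff_false, not_and]
    intro h1 h2; linarith
  rw [h]
  simp

lemma expOne_Iic_le {a : ℝ} (ha : 0 ≤ a) : expOne (Set.Iic a) ≤ ENNReal.ofReal a := by
  rw [expOne, withDensity_apply _ measurableSet_Iic, Measure.restrict_restrict measurableSet_Iic]
  have h : Set.Iic a ∩ Set.Ioi 0 = Set.Ioc 0 a := by
    ext x; simp only [Set.mem_inter_iff, Set.mem_Iic, Set.mem_Ioi, Set.mem_Ioc]
    tauto
  rw [h]
  calc ∫⁻ x in Set.Ioc 0 a, ENNReal.ofReal (Real.exp (-x)) ≤ ∫⁻ _x in Set.Ioc 0 a, 1 := by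
        refine setLIntegral_mono measurable_const fun x hx => ?_
        rw [ENNReal.ofReal_le_one]
        exact Real.exp_le_one_iff.mpr (by linarith [hx.1])
    _ = volume (Set.Ioc 0 a) := setLIntegral_one _
    _ = ENNReal.ofReal a := by rw [Real.volume_Ioc, sub_zero]

lemma prob_bound (σ : BaseSetting) (Nn : ℕ) (hN : 0 < Nn) (i : LTree) (hidis : i.distinct)
    (t B C0 : ℝ) (ht : 0 ≤ t) (hC0nn : 0 ≤ C0) (hmass : i.massOf σ.y ≤ B)
    (hC0 : ∀ x z, 0 < x → x ≤ B → 0 < z → z ≤ B → σ.K x z ≤ C0) :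
    σ.P {ω : Omega | Sclock (Nn:ℝ) σ.K σ.y ω i ≤ t} ≤
      ENNReal.ofReal ((C0 * t / Nn) ^ (i.nLeaves - 1)) := by
  set a := C0 * t / (Nn:ℝ) with ha_def
  have hNr : (0:ℝ) < Nn := Nat.cast_pos.mpr hN
  have ha : 0 ≤ a := div_nonneg (mul_nonneg hC0nn ht) hNr.le
  have hBad : ∀ v : LTree, σ.P {ω : Omega | ω v < 0} = 0 := by
    intro v
    have h1 : {ω : Omega | ω v < 0} = (fun ω : Omega => ω v) ⁻¹' Set.Iio 0 := rfl
    rw [h1, ← Measure.map_apply (measurable_pi_apply v) measurableSet_Iio, σ.law v, expOne_Iio]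
  have hGc : σ.P (⋃ v ∈ inodes i, {ω : Omega | ω v < 0}) = 0 := by
    refine le_antisymm (le_trans (measure_biUnion_finset_le _ _) ?_) (zero_le')
    simp [hBad]
  have hIic : ∀ v : LTree, σ.P {ω : Omega | ω v ≤ a} ≤ ENNReal.ofReal a := by
    intro v
    have h1 : {ω : Omega | ω v ≤ a} = (fun ω : Omega => ω v) ⁻¹' Set.Iic a := rfl
    rw [h1, ← Measure.map_apply (measurable_pi_apply v) measurableSet_Iic, σ.law v]
    exact expOne_Iic_le ha
  have hincl : {ω : Omega | Sclock (Nn:ℝ) σ.K σ.y ω i ≤ t} ⊆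
      (⋂ v ∈ inodes i, {ω : Omega | ω v ≤ a}) ∪ (⋃ v ∈ inodes i, {ω : Omega | ω v < 0}) := by
    intro ω hω
    by_cases hg : ∀ v ∈ inodes i, 0 ≤ ω v
    · left
      simp only [Set.mem_iInter, Set.mem_setOf_eq]
      exact fun v hv => Sclock_key hNr ht (fun x z hx hz => σ.Kpos x hx z hz) σ.ypos hC0 i hmass hg hω v hv
    · right
      push_neg at hg
      obtain ⟨v, hv, hv0⟩ := hg
      exact Set.mem_biUnion hv (by simpa using hv0)
  have hprod : σ.P (⋂ v ∈ inodes i, {ω : Omega | ω v ≤ a}) =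
      ∏ v ∈ inodes i, σ.P {ω : Omega | ω v ≤ a} :=
    σ.indep.meas_biInter fun v _ => ⟨Set.Iic a, measurableSet_Iic, rfl⟩
  calc σ.P {ω : Omega | Sclock (Nn:ℝ) σ.K σ.y ω i ≤ t}
      ≤ σ.P ((⋂ v ∈ inodes i, {ω : Omega | ω v ≤ a}) ∪
          (⋃ v ∈ inodes i, {ω : Omega | ω v < 0})) := measure_mono hincl
    _ ≤ σ.P (⋂ v ∈ inodes i, {ω : Omega | ω v ≤ a}) +
          σ.P (⋃ v ∈ inodes i, {ω : Omega | ω v < 0}) := measure_union_le _ _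
    _ = σ.P (⋂ v ∈ inodes i, {ω : Omega | ω v ≤ a}) := by rw [hGc, add_zero]
    _ = ∏ v ∈ inodes i, σ.P {ω : Omega | ω v ≤ a} := hprod
    _ ≤ ∏ _v ∈ inodes i, ENNReal.ofReal a := Finset.prod_le_prod' fun v _ => hIic v
    _ = ENNReal.ofReal a ^ (inodes i).card := Finset.prod_const _
    _ = ENNReal.ofReal (a ^ (i.nLeaves - 1)) := by
        rw [card_inodes hidis, ENNReal.ofReal_pow ha]

/-! #### Deterministic facts -/

lemma histTree_mass (S : LTree → ℝ) (y : ℕ → ℝ) :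
    ∀ j : LTree, (histTree S y j).mass = j.massOf y
  | .leaf k => rfl
  | .node l r => by
      simp only [histTree, HTree.mass, LTree.massOf, histTree_mass S y l, histTree_mass S y r]

lemma psiM_nonneg (M x : ℝ) : 0 ≤ psiM M x := le_max_left _ _

lemma psiM_le_one (M x : ℝ) : psiM M x ≤ 1 :=
  max_le zero_le_one (min_le_left _ _)

lemma psiM_eq_zero {M x : ℝ} (h : M + 1 ≤ x) : psiM M x = 0 := by
  rw [psiM, max_eq_left]
  exact le_trans (min_le_right _ _) (by linarith)

end Stmt18

/-- (Uniform bound from the proof of Lemma 3.2.)  Fix `t`,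
`M > 0`, a labeled tree `i ∈ 𝕋*[n]` with leaf masses `y`, a bounded continuous `f`
on `A_τ(0,t)` (τ = τ(i)), and set `f_i^M(ξ) = f(g_i(ξ)) Ψ_M(m(ξ))`.  Then, with
`C = (sup_{[0,M+1]²} K)^{n-1}`,
`|P_t^N f_i^M(y)| ≤ C ‖f‖_∞ t^{n-1}` almost surely, where
`P_t^N f_i^M(y) = N^{n-1} E(f_i^M(ξ_t^i) 1{S_i ≤ t < T_i} | F_J)`, `J = [N] ∖ [n]`. -/
theorem statement18 (σ : BaseSetting) (N n : ℕ) (hn : 1 ≤ n) (hnN : n ≤ N)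
    (i : LTree) (hidis : i.distinct) (hilab : i.labels ⊆ Finset.range n)
    (hin : i.nLeaves = n)
    (t M : ℝ) (ht : 0 ≤ t) (hM : 0 < M)
    (f : HTree → ℝ) (Cf : ℝ) (hfb : ∀ ξ, |f ξ| ≤ Cf)
    (hfc : ContinuousOn f {ξ : HTree | ξ.shape = i.shape ∧ ξ.memA t})
    (C0 : ℝ)
    (hC0 : ∀ x ∈ Set.Icc (0:ℝ) (M + 1), ∀ z ∈ Set.Icc (0:ℝ) (M + 1), σ.K x z ≤ C0) :
    ∀ᵐ ω ∂σ.P,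
      |(N : ℝ) ^ (n - 1) *
          MeasureTheory.condExp (Fsigma (Finset.range N \ Finset.range n)) σ.P
            (fun ω' => f (histTree (Sclock (N : ℝ) σ.K σ.y ω') σ.y i) *
              psiM M (histTree (Sclock (N : ℝ) σ.K σ.y ω') σ.y i).mass *
              (if Sclock (N : ℝ) σ.K σ.y ω' i ≤ t ∧
                  (t : EReal) < deathTime (Sclock (N : ℝ) σ.K σ.y ω') (Finset.range N) i
               then (1:ℝ) else 0)) ω|
        ≤ C0 ^ (n - 1) * Cf * t ^ (n - 1) := by
  classical
  haveI := σ.prob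
  open Stmt18 in
  set J : Finset ℕ := Finset.range N \ Finset.range n with hJ
  have hm2 : Fsigma J ≤ (inferInstance : MeasurableSpace Omega) := Stmt18.Fsigma_le J
  haveI : SigmaFinite (σ.P.trim hm2) := inferInstance
  set g : Omega → ℝ := fun ω' => f (histTree (Sclock (N : ℝ) σ.K σ.y ω') σ.y i) *
      psiM M (histTree (Sclock (N : ℝ) σ.K σ.y ω') σ.y i).mass *
      (if Sclock (N : ℝ) σ.K σ.y ω' i ≤ t ∧
          (t : EReal) < deathTime (Sclock (N : ℝ) σ.K σ.y ω') (Finset.range N) i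
       then (1:ℝ) else 0) with hg_def
  have hCf : 0 ≤ Cf := le_trans (abs_nonneg _) (hfb (HTree.leaf 0))
  have hC0pos : 0 < C0 :=
    lt_of_lt_of_le (σ.Kpos M hM M hM)
      (hC0 M ⟨hM.le, by linarith⟩ M ⟨hM.le, by linarith⟩)
  have hRHS : 0 ≤ C0 ^ (n - 1) * Cf * t ^ (n - 1) := by positivity
  have hNpos : (0:ℝ) < N := by
    have : 0 < N := lt_of_lt_of_le hn hnN
    exact_mod_cast this
  -- dispose of the degenerate cases
  by_cases hint : Integrable g σ.P
  swap
  · rw [condExp_of_not_integrable hint]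
    filter_upwards with ω
    simpa using hRHS
  by_cases hMle : i.massOf σ.y ≤ M + 1
  swap
  · have hg0 : g = 0 := by
      funext ω'
      rw [hg_def]
      simp only [Stmt18.histTree_mass, Stmt18.psiM_eq_zero (le_of_not_ge hMle), Pi.zero_apply,
        mul_zero, zero_mul]
    rw [hg0, condExp_zero]
    filter_upwards with ω
    simpa using hRHS
  -- the dominating function
  set E : Set Omega := {ω : Omega | Sclock (N:ℝ) σ.K σ.y ω i ≤ t} with hE_def
  set h : Omega → ℝ := E.indicator fun _ => Cf with hh_def
  have hSmeas : Measurable fun ω : Omega => Sclock (N:ℝ) σ.K σ.y ω i :=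
    Stmt18.measurable_Sclock _ _ _ _ fun v _ => measurable_pi_apply v
  have hEmeas : MeasurableSet E := measurableSet_le hSmeas measurable_const
  have hhint : Integrable h σ.P := (integrable_const Cf).indicator hEmeas
  have hbound : ∀ ω', |g ω'| ≤ h ω' := by
    intro ω'
    by_cases hc : Sclock (N : ℝ) σ.K σ.y ω' i ≤ t ∧
        (t : EReal) < deathTime (Sclock (N : ℝ) σ.K σ.y ω') (Finset.range N) i
    · have hωE : ω' ∈ E := hc.1
      have hhv : h ω' = Cf := by rw [hh_def, Set.indicator_of_mem hωE]
      rw [hhv, hg_def]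
      simp only [if_pos hc, mul_one, abs_mul]
      calc |f (histTree (Sclock (N : ℝ) σ.K σ.y ω') σ.y i)| *
            |psiM M (histTree (Sclock (N : ℝ) σ.K σ.y ω') σ.y i).mass|
          ≤ Cf * 1 := by
            refine mul_le_mul (hfb _) ?_ (abs_nonneg _) hCf
            rw [abs_of_nonneg (Stmt18.psiM_nonneg _ _)]
            exact Stmt18.psiM_le_one _ _
        _ = Cf := mul_one Cf
    · have hg0 : g ω' = 0 := by rw [hg_def]; simp [if_neg hc]
      rw [hg0, abs_zero, hh_def]
      exact Set.indicator_nonneg (fun _ _ => hCf) _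
  -- conditional expectation bounds
  have h1 : σ.P[g|Fsigma J] ≤ᵐ[σ.P] σ.P[h|Fsigma J] :=
    condExp_mono hint hhint (ae_of_all _ fun ω' => (le_abs_self _).trans (hbound ω'))
  have h2 : σ.P[-g|Fsigma J] ≤ᵐ[σ.P] σ.P[h|Fsigma J] :=
    condExp_mono hint.neg hhint
      (ae_of_all _ fun ω' => (neg_le_abs _).trans (hbound ω'))
  have h2' : -σ.P[g|Fsigma J] ≤ᵐ[σ.P] σ.P[h|Fsigma J] :=
    ((condExp_neg g (Fsigma J)).symm.trans_le h2 : _)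
  -- conditional expectation of h via independence
  have hSm1 : Measurable[Stmt18.mLeft n] fun ω : Omega => Sclock (N:ℝ) σ.K σ.y ω i :=
    Stmt18.measurable_Sclock _ _ _ _ fun v hv =>
      Stmt18.measurable_eval_mLeft ((Stmt18.labels_subset_of_mem_inodes hv).trans hilab)
  have hEm1 : MeasurableSet[Stmt18.mLeft n] E :=
    measurableSet_le hSm1 measurable_const
  have hhsm : StronglyMeasurable[Stmt18.mLeft n] h :=
    stronglyMeasurable_const.indicator hEm1
  have hindep := Stmt18.indep_mLeft σ n N
  have hcondh : σ.P[h|Fsigma J] =ᵐ[σ.P] fun _ => ∫ ω', h ω' ∂σ.P := by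
    rw [hJ]
    exact MeasureTheory.condExp_indep_eq (Stmt18.mLeft_le n)
      (Stmt18.Fsigma_le _) hhsm (by rw [← hJ]; exact hindep)
  have hinth : ∫ ω', h ω' ∂σ.P = (σ.P E).toReal * Cf := by
    rw [hh_def, integral_indicator_const _ hEmeas, smul_eq_mul, measureReal_def]
  -- the probability bound
  have hPE : (σ.P E).toReal ≤ (C0 * t / N) ^ (n - 1) := by
    refine ENNReal.toReal_le_of_le_ofReal (by positivity) ?_
    have := Stmt18.prob_bound σ N (lt_of_lt_of_le hn hnN) i hidis t (M+1) C0 ht hC0pos.le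
      hMle (fun x z hx hxB hz hzB => hC0 x ⟨hx.le, hxB⟩ z ⟨hz.le, hzB⟩)
    rw [hin] at this
    exact this
  -- put everything together
  filter_upwards [h1, h2', hcondh] with ω hω1 hω2 hωc
  rw [abs_mul, abs_of_nonneg (by positivity : (0:ℝ) ≤ (N:ℝ) ^ (n-1))]
  have habs : abs ((σ.P[g|Fsigma J]) ω) ≤ (σ.P[h|Fsigma J]) ω :=
    abs_le.mpr ⟨neg_le.mp (le_of_neg_le_neg (by simpa using neg_le_neg hω2)), hω1⟩
  calc (N:ℝ) ^ (n-1) * abs ((σ.P[g|Fsigma J]) ω)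
      ≤ (N:ℝ) ^ (n-1) * (σ.P[h|Fsigma J]) ω :=
        mul_le_mul_of_nonneg_left habs (by positivity)
    _ = (N:ℝ) ^ (n-1) * ((σ.P E).toReal * Cf) := by rw [hωc, hinth]
    _ ≤ (N:ℝ) ^ (n-1) * ((C0 * t / N) ^ (n-1) * Cf) := by
        refine mul_le_mul_of_nonneg_left (mul_le_mul_of_nonneg_right hPE hCf) (by positivity)
    _ = C0 ^ (n - 1) * Cf * t ^ (n - 1) := by
        rw [div_pow, mul_pow]
        field_simp

end
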